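/- arXiv:2405.06139 — 4 statements merged into one kernel-verified Lean document; each statement's English description precedes it below -/
import Mathlib

section
/- For all real x ≥ 190, Li(x) > x/log x + x/(log x)^2, where Li(x) = ∫₂ˣ dt/log t. -/
noncomputable def Li (x : ℝ) : ℝ := ∫ t in (2:ℝ)..x, 1 / Real.log t

/-!
Integrating by parts twice, `Li x = x / log x + x / log x ^ 2 - c + 2 ∫₂ˣ dt / log³ t` with
`c = 2 / log 2 + 2 / log 2 ^ 2 ≈ 7.05`, so it suffices that `2 ∫₂¹²⁸ dt / log³ t > c`. Since the
integrand is decreasing, the integral dominates its lower Riemann sum on the geometric grid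
`2, 2√2, 4, …, 128`, which only involves `√2` and `log 2` and exceeds `c / 2` with room to spare.
-/

open Real Finset MeasureTheory intervalIntegral

theorem AntitoneOn.sum_mul_le_integral {f : ℝ → ℝ} {p : ℕ → ℝ} {n : ℕ}
    (hf : AntitoneOn f (Set.Icc (p 0) (p n))) (hp : Monotone p) :
    ∑ k ∈ range n, (p (k + 1) - p k) * f (p (k + 1)) ≤ ∫ x in p 0..p n, f x := by
  have hsub : ∀ k < n, Set.Icc (p k) (p (k + 1)) ⊆ Set.Icc (p 0) (p n) := fun k hk =>
    Set.Icc_subset_Icc (hp k.zero_le) (hp hk)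
  have hint : ∀ k < n, IntervalIntegrable f volume (p k) (p (k + 1)) := fun k hk =>
    (hf.mono (Set.uIcc_of_le (hp k.le_succ) ▸ hsub k hk)).intervalIntegrable
  rw [← sum_integral_adjacent_intervals hint]
  gcongr with k hk
  replace hk := mem_range.1 hk
  rw [← smul_eq_mul, ← intervalIntegral.integral_const]
  exact integral_mono_on (hp k.le_succ) intervalIntegrable_const (hint k hk) fun x hx =>
    hf (hsub k hk hx) (hsub k hk (Set.right_mem_Icc.2 (hp k.le_succ))) hx.2

theorem antitoneOn_one_div_log_pow (n : ℕ) :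
    AntitoneOn (fun t : ℝ => 1 / log t ^ n) (Set.Ioi 1) := fun _ hs _ _ hst =>
  one_div_le_one_div_of_le (pow_pos (log_pos hs) n)
    (pow_le_pow_left₀ (log_pos hs).le (log_le_log (zero_lt_one.trans hs) hst) n)

theorem intervalIntegrable_one_div_log_pow (n : ℕ) {a b : ℝ} (ha : 1 < a) (hb : 1 < b) :
    IntervalIntegrable (fun t : ℝ => 1 / log t ^ n) volume a b :=
  ((antitoneOn_one_div_log_pow n).mono fun _ ht =>
    lt_of_lt_of_le (lt_min ha hb) ht.1).intervalIntegrable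

theorem hasDerivAt_div_log_add_div_log_sq {t : ℝ} (ht : 1 < t) :
    HasDerivAt (fun u : ℝ => u / log u + u / log u ^ 2) (1 / log t - 2 * (1 / log t ^ 3)) t := by
  have ht0 : t ≠ 0 := (zero_lt_one.trans ht).ne'
  have hl : log t ≠ 0 := (log_pos ht).ne'
  have hlog := hasDerivAt_log ht0
  refine (((hasDerivAt_id' t).div hlog hl).add
    ((hasDerivAt_id' t).div (hlog.pow 2) (pow_ne_zero 2 hl))).congr_deriv ?_
  simp only [Pi.pow_apply]
  field_simp
  ring

theorem Li_eq_add_integral_one_div_log_cube {x : ℝ} (hx : 2 ≤ x) :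
    Li x = x / log x + x / log x ^ 2 - (2 / log 2 + 2 / log 2 ^ 2)
      + 2 * ∫ t in (2:ℝ)..x, 1 / log t ^ 3 := by
  have hx1 : (1 : ℝ) < x := by linarith
  have hint₁ : IntervalIntegrable (fun t => 1 / log t) volume 2 x := by
    simpa using intervalIntegrable_one_div_log_pow 1 one_lt_two hx1
  have hint₃ := (intervalIntegrable_one_div_log_pow 3 one_lt_two hx1).const_mul 2
  have hftc := integral_eq_sub_of_hasDerivAt (fun t ht => hasDerivAt_div_log_add_div_log_sq
    (one_lt_two.trans_le (Set.uIcc_of_le hx ▸ ht).1)) (hint₁.sub hint₃)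
  rw [integral_sub hint₁ hint₃, intervalIntegral.integral_const_mul] at hftc
  rw [Li]
  linarith

-- `log 2 ^ 3` times the lower Riemann sum of `1 / log t ^ 3` on the grid `√2 ^ 2, …, √2 ^ 14`,
-- using that `log (√2 ^ j) = j * log 2 / 2`.
noncomputable def sqrtTwoGridSum : ℝ :=
  ∑ k ∈ range 12, (√2 ^ (k + 3) - √2 ^ (k + 2)) * 8 / ((k : ℝ) + 3) ^ 3

theorem sqrtTwoGridSum_div_le_integral_one_div_log_cube :
    sqrtTwoGridSum / log 2 ^ 3 ≤ ∫ t in (2:ℝ)..128, 1 / log t ^ 3 := by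
  have hs : √2 ^ 2 = 2 := sq_sqrt zero_le_two
  have hmono : Monotone fun j : ℕ => √2 ^ (j + 2) := fun _ _ hij =>
    pow_le_pow_right₀ (by simp) (by omega)
  have hanti : AntitoneOn (fun t => 1 / log t ^ 3) (Set.Icc (√2 ^ (0 + 2)) (√2 ^ (12 + 2))) :=
    (antitoneOn_one_div_log_pow 3).mono fun t ht => by
      simp only [zero_add, hs] at ht
      exact Set.mem_Ioi.2 (by linarith [ht.1])
  convert hanti.sum_mul_le_integral hmono using 1
  · rw [sqrtTwoGridSum, sum_div]
    refine sum_congr rfl fun k _ => ?_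
    rw [log_pow, log_sqrt zero_le_two]
    push_cast
    field_simp
    ring
  · rw [show 12 + 2 = 2 * 7 from rfl, pow_mul, hs]
    norm_num

theorem log_two_add_sq_lt_sqrtTwoGridSum : log 2 + log 2 ^ 2 < sqrtTwoGridSum := by
  have hs : √2 ^ 2 = 2 := sq_sqrt zero_le_two
  have hsqrt : 1.414 < √2 := by nlinarith [sqrt_nonneg 2]
  have hlog : log 2 < 0.6931471808 := log_two_lt_d9
  have hlog0 : 0 < log 2 := log_pos one_lt_two
  have hpow : ∀ m : ℕ, √2 ^ (m + 2) = 2 * √2 ^ m := fun m => by rw [pow_add, hs, mul_comm]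
  simp only [sqrtTwoGridSum, sum_range_succ, sum_range_zero, hpow, pow_zero, pow_one]
  norm_num
  nlinarith

theorem div_log_two_add_div_log_two_sq_lt_integral :
    2 / log 2 + 2 / log 2 ^ 2 < 2 * ∫ t in (2:ℝ)..128, 1 / log t ^ 3 := by
  have hl : 0 < log 2 := log_pos one_lt_two
  have hsum := log_two_add_sq_lt_sqrtTwoGridSum
  have hconst : 2 / log 2 + 2 / log 2 ^ 2 < 2 * (sqrtTwoGridSum / log 2 ^ 3) := by
    rw [div_add_div _ _ hl.ne' (by positivity), div_lt_iff₀ (by positivity)]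
    field_simp
    nlinarith
  linarith [sqrtTwoGridSum_div_le_integral_one_div_log_cube]

theorem Li_lower_bound (x : ℝ) (hx : 190 ≤ x) :
    x / Real.log x + x / (Real.log x) ^ 2 < Li x := by
  have htail : ∫ t in (2:ℝ)..128, 1 / log t ^ 3 ≤ ∫ t in (2:ℝ)..x, 1 / log t ^ 3 :=
    integral_mono_interval le_rfl (by norm_num) (by linarith)
      (ae_restrict_of_forall_mem measurableSet_Ioc fun t ht =>
        have := log_pos (one_lt_two.trans ht.1); by positivity)
      (intervalIntegrable_one_div_log_pow 3 one_lt_two (by linarith))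
  rw [Li_eq_add_integral_one_div_log_cube (by linarith)]
  linarith [div_log_two_add_div_log_two_sq_lt_integral]
end

section
/- For all real x ≥ 10^6, Li(x) < x/log x + (6/5)·x/(log x)^2, where Li(x) = ∫₂ˣ dt/log t. -/
/-!
Write `L = log t` and compare `Li` with the truncated asymptotic series
`H(t) = t/L + t/L² + 2t/L³ + 6t/L⁴ + 24t/L⁵ + 440t/L⁶`, whose last coefficient is raised
from `5! = 120` to `440` so that `H' = 1/L + 320/L⁶ - 2640/L⁷ ≥ 1/L` once `L ≥ 8.25`.
Thus `∫_{4096}^x dt/log t ≤ H(x) - H(4096)`. On `[2, 4096]` the function `1/log` is convex,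
so the trapezoid rule on the dyadic nodes `2, 4, …, 4096` overestimates the integral, and the
resulting bound is at most `H(4096) + 2`. Hence `Li x ≤ H(x) + 2`, while
`x/L + (6/5)·x/L² - H(x) = (x/L²)(1/5 - 2/L - 6/L² - 24/L³ - 440/L⁴)`,
which exceeds `2` for `x ≥ 10⁶` because then `L ≥ 13.8` and `x/L² ≥ 5000`.
-/

open Real Set MeasureTheory

theorem ConvexOn.intervalIntegral_le_trapezoid {f : ℝ → ℝ} {a b : ℝ} (hab : a ≤ b)
    (hf : ConvexOn ℝ (Icc a b) f) (hint : IntervalIntegrable f volume a b) :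
    ∫ t in a..b, f t ≤ (b - a) * (f a + f b) / 2 := by
  rcases hab.eq_or_lt with rfl | hab
  · simp
  have hchord : ∀ t ∈ Icc a b, f t ≤ ((b - t) * f a + (t - a) * f b) / (b - a) := by
    rintro t ⟨hat, htb⟩
    rw [le_div_iff₀' (sub_pos.2 hab)]
    rcases hat.eq_or_lt with rfl | hat
    · linarith
    rcases htb.eq_or_lt with rfl | htb
    · linarith
    exact hf.secant_mono_aux1 (left_mem_Icc.2 hab.le) (right_mem_Icc.2 hab.le) hat htb
  calc ∫ t in a..b, f t ≤ ∫ t in a..b, ((b - t) * f a + (t - a) * f b) / (b - a) :=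
        intervalIntegral.integral_mono_on hab.le hint
          (by apply Continuous.intervalIntegrable; fun_prop) hchord
    _ = (b - a) * (f a + f b) / 2 := by
        rw [intervalIntegral.integral_div, intervalIntegral.integral_add,
          intervalIntegral.integral_mul_const, intervalIntegral.integral_mul_const,
          intervalIntegral.integral_comp_sub_left (fun t => t),
          intervalIntegral.integral_comp_sub_right (fun t => t)]
        · simp only [sub_self, integral_id, ne_eq, OfNat.ofNat_ne_zero, not_false_eq_true,
            zero_pow, sub_zero]
          field_simp
        all_goals apply Continuous.intervalIntegrable; fun_prop

theorem ConvexOn.intervalIntegral_le_sum_trapezoid {f : ℝ → ℝ} {x : ℕ → ℝ} {n : ℕ}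
    (hx : Monotone x) (hf : ConvexOn ℝ (Icc (x 0) (x n)) f)
    (hint : IntervalIntegrable f volume (x 0) (x n)) :
    ∫ t in x 0..x n, f t ≤
      ∑ k ∈ Finset.range n, (x (k + 1) - x k) * (f (x k) + f (x (k + 1))) / 2 := by
  have hsub : ∀ k < n, Icc (x k) (x (k + 1)) ⊆ Icc (x 0) (x n) := fun k hk =>
    Icc_subset_Icc (hx k.zero_le) (hx hk)
  have hint' : ∀ k < n, IntervalIntegrable f volume (x k) (x (k + 1)) := fun k hk =>
    hint.mono_set <| by
      simpa [uIcc_of_le (hx k.le_succ), uIcc_of_le (hx n.zero_le)] using hsub k hk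
  rw [← intervalIntegral.sum_integral_adjacent_intervals hint']
  refine Finset.sum_le_sum fun k hk => ?_
  have hk := Finset.mem_range.1 hk
  exact (hf.subset (hsub k hk) (convex_Icc _ _)).intervalIntegral_le_trapezoid (hx k.le_succ)
    (hint' k hk)

theorem convexOn_one_div_log : ConvexOn ℝ (Ioi 1) fun t => 1 / log t := by
  have hlog : log '' Ioi 1 = Ioi 0 := by rw [image_log_Ioi one_pos, log_one]
  have hinv : ConvexOn ℝ (log '' Ioi 1) fun u : ℝ => 1 / u := by
    simpa [hlog, one_div] using convexOn_zpow (𝕜 := ℝ) (-1)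
  refine hinv.comp_concaveOn
    (strictConcaveOn_log_Ioi.concaveOn.subset (Ioi_subset_Ioi zero_le_one) (convex_Ioi 1)) ?_
  rw [hlog]
  exact fun u hu v _ huv => one_div_le_one_div_of_le hu huv

theorem continuousOn_one_div_log : ContinuousOn (fun t => 1 / log t) (Ioi 1) :=
  continuousOn_const.div (continuousOn_log.mono fun _ ht => (zero_lt_one.trans ht).ne')
    fun _ ht => (log_pos ht).ne'

theorem intervalIntegrable_one_div_log {a b : ℝ} (ha : 1 < a) (hb : 1 < b) :
    IntervalIntegrable (fun t => 1 / log t) volume a b :=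
  (continuousOn_one_div_log.mono fun _ ht => (lt_min ha hb).trans_le ht.1).intervalIntegrable

-- `309887 / 770 = ∑ k < 11, 2 ^ k * (1 / (k + 1) + 1 / (k + 2))` is the dyadic trapezoid sum
-- times `log 2`.
theorem integral_two_4096_one_div_log_le :
    ∫ t in (2:ℝ)..4096, 1 / log t ≤ 309887 / 770 / log 2 := by
  have hx : Monotone fun k : ℕ => (2:ℝ) ^ (k + 1) := fun i j hij =>
    pow_le_pow_right₀ one_le_two (by omega)
  have key := (convexOn_one_div_log.subset (fun t ht => lt_of_lt_of_le (by norm_num) ht.1)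
    (convex_Icc _ _)).intervalIntegral_le_sum_trapezoid hx (n := 11)
    (intervalIntegrable_one_div_log (by norm_num) (by norm_num))
  simp only [Finset.sum_range_succ, Finset.sum_range_zero, log_pow] at key
  norm_num at key
  convert key using 1
  · simp only [one_div]
  · field_simp
    norm_num

theorem hasDerivAt_mul_div_log_pow (c : ℝ) (k : ℕ) {t : ℝ} (ht : 0 < t) (hlog : log t ≠ 0) :
    HasDerivAt (fun s => c * s / log s ^ k) (c / log t ^ k - c * k / log t ^ (k + 1)) t := by
  refine (((hasDerivAt_id t).const_mul c).div ((hasDerivAt_log ht.ne').pow k)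
    (pow_ne_zero k hlog)).congr_deriv ?_
  rcases k with _ | k
  · simp
  · simp only [Pi.pow_apply, id, Nat.add_sub_cancel]
    field_simp
    push_cast
    ring

noncomputable def liMajorant (t : ℝ) : ℝ :=
  t / log t + t / log t ^ 2 + 2 * t / log t ^ 3 + 6 * t / log t ^ 4 + 24 * t / log t ^ 5 +
    440 * t / log t ^ 6

theorem hasDerivAt_liMajorant {t : ℝ} (ht : 1 < t) :
    HasDerivAt liMajorant (1 / log t + 320 / log t ^ 6 - 2640 / log t ^ 7) t := by
  have h (c : ℝ) (k : ℕ) :=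
    hasDerivAt_mul_div_log_pow c k (zero_lt_one.trans ht) (log_pos ht).ne'
  have hsum := (((((h 1 1).add (h 1 2)).add (h 2 3)).add (h 6 4)).add (h 24 5)).add (h 440 6)
  simp only [one_mul, pow_one] at hsum
  refine hsum.congr_deriv ?_
  push_cast
  ring

theorem one_div_log_le_deriv_liMajorant {t : ℝ} (ht : 8.25 ≤ log t) :
    1 / log t ≤ 1 / log t + 320 / log t ^ 6 - 2640 / log t ^ 7 := by
  have hpos : 0 < log t := by linarith
  have : 2640 / log t ^ 7 ≤ 320 / log t ^ 6 := by
    rw [div_le_div_iff₀ (by positivity) (by positivity)]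
    nlinarith [pow_pos hpos 6]
  linarith

theorem integral_one_div_log_le_liMajorant_sub {a b : ℝ} (ha : 0 < a) (hlog : 8.25 ≤ log a)
    (hab : a ≤ b) : ∫ t in a..b, 1 / log t ≤ liMajorant b - liMajorant a := by
  have hlogt : ∀ t ∈ Icc a b, 8.25 ≤ log t := fun t ht => hlog.trans (log_le_log ha ht.1)
  have hone : ∀ t ∈ Icc a b, 1 < t := fun t ht =>
    (log_pos_iff (ha.le.trans ht.1)).1 (by linarith [hlogt t ht])
  have hderiv : ∀ t ∈ Icc a b, HasDerivAt liMajorant _ t := fun t ht =>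
    hasDerivAt_liMajorant (hone t ht)
  exact intervalIntegral.integral_le_sub_of_hasDeriv_right_of_le hab
    (fun t ht => (hderiv t ht).continuousAt.continuousWithinAt)
    (fun t ht => (hderiv t (Ioo_subset_Icc_self ht)).hasDerivWithinAt)
    ((continuousOn_one_div_log.mono hone).integrableOn_Icc)
    (fun t ht => one_div_log_le_deriv_liMajorant (hlogt t (Ioo_subset_Icc_self ht)))

theorem trapezoid_bound_le_liMajorant_4096 : 309887 / 770 / log 2 ≤ liMajorant 4096 + 2 := by
  have hlo := log_two_gt_d9
  have hhi := log_two_lt_d9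
  rw [liMajorant, show (4096:ℝ) = 2 ^ 12 by norm_num, log_pow]
  push_cast
  calc 309887 / 770 / log 2 ≤ 309887 / 770 / 0.6931471803 := by gcongr
    _ ≤ 2 ^ 12 / (12 * 0.6931471808) + 2 ^ 12 / (12 * 0.6931471808) ^ 2
        + 2 * 2 ^ 12 / (12 * 0.6931471808) ^ 3 + 6 * 2 ^ 12 / (12 * 0.6931471808) ^ 4
        + 24 * 2 ^ 12 / (12 * 0.6931471808) ^ 5 + 440 * 2 ^ 12 / (12 * 0.6931471808) ^ 6 + 2 := by
      norm_num
    _ ≤ _ := by gcongr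

theorem Li_le_liMajorant_add_two {x : ℝ} (hx : 4096 ≤ x) : Li x ≤ liMajorant x + 2 := by
  have hsplit : Li x = (∫ t in (2:ℝ)..4096, 1 / log t) + ∫ t in (4096:ℝ)..x, 1 / log t :=
    (intervalIntegral.integral_add_adjacent_intervals
      (intervalIntegrable_one_div_log (by norm_num) (by norm_num))
      (intervalIntegrable_one_div_log (by norm_num) (by linarith))).symm
  have hlog4096 : 8.25 ≤ log 4096 := by
    rw [show (4096:ℝ) = 2 ^ 12 by norm_num, log_pow]
    push_cast
    linarith [log_two_gt_d9]
  linarith [integral_two_4096_one_div_log_le, trapezoid_bound_le_liMajorant_4096,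
    integral_one_div_log_le_liMajorant_sub (by norm_num) hlog4096 hx]

theorem exp_div_sq_le_exp_div_sq {a b : ℝ} (ha : 2 ≤ a) (hab : a ≤ b) :
    exp a / a ^ 2 ≤ exp b / b ^ 2 := by
  have hsq : (b / a) ^ 2 ≤ exp (b - a) := by
    have h1 : b / a ≤ 1 + (b - a) / 2 := by
      rw [div_le_iff₀ (by linarith)]
      nlinarith
    have ha0 : 0 ≤ b / a := div_nonneg (by linarith) (by linarith)
    calc (b / a) ^ 2 ≤ (1 + (b - a) / 2) ^ 2 := by gcongr
      _ ≤ exp ((b - a) / 2) ^ 2 := by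
        have := add_one_le_exp ((b - a) / 2)
        gcongr
        linarith
      _ = exp (b - a) := by rw [← exp_nat_mul]; ring_nf
  have hb : b ≠ 0 := (by linarith : 0 < b).ne'
  calc exp a / a ^ 2 = exp a * (b / a) ^ 2 / b ^ 2 := by field_simp
    _ ≤ exp a * exp (b - a) / b ^ 2 := by gcongr
    _ = exp b / b ^ 2 := by rw [← exp_add]; ring_nf

theorem log_ten_pow_six_bounds : 13.8 ≤ log (10 ^ 6) ∧ log (10 ^ 6) ≤ 20 * log 2 := by
  have hsplit : log (10 ^ 6) = 20 * log 2 + log (10 ^ 6 / 2 ^ 20) := by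
    rw [log_div (by norm_num) (by norm_num), log_pow 2 20]; push_cast; ring
  have h1 := one_sub_inv_le_log_of_pos (x := (10:ℝ) ^ 6 / 2 ^ 20) (by norm_num)
  have h2 : log ((10:ℝ) ^ 6) ≤ log (2 ^ 20) := log_le_log (by norm_num) (by norm_num)
  rw [log_pow 2 20] at h2
  push_cast at h2
  constructor
  · rw [hsplit]; norm_num at h1 ⊢; linarith [log_two_gt_d9]
  · exact h2

theorem liMajorant_add_two_lt {x : ℝ} (hx : 10 ^ 6 ≤ x) :
    liMajorant x + 2 < x / log x + 6 / 5 * x / log x ^ 2 := by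
  have hx0 : 0 < x := by linarith
  obtain ⟨hlo6, hhi6⟩ := log_ten_pow_six_bounds
  -- kept opaque: `linarith` fails on hypotheses stated with `log (10 ^ 6)` itself
  set L₀ := log (10 ^ 6)
  have hratio : 5000 ≤ x / log x ^ 2 := by
    have := exp_div_sq_le_exp_div_sq (by linarith) (log_le_log (by norm_num) hx)
    rw [exp_log hx0, exp_log (by norm_num)] at this
    refine le_trans ?_ this
    rw [le_div_iff₀ (by positivity)]
    nlinarith [log_two_lt_d9]
  set L := log x with hLx
  have hL : 13.8 ≤ L := hlo6.trans (log_le_log (by norm_num) hx)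
  have hψ : 23 / 10000 ≤ 1 / 5 - 2 / L - 6 / L ^ 2 - 24 / L ^ 3 - 440 / L ^ 4 := by
    have e1 : 2 / L ≤ 2 / 13.8 := by gcongr
    have e2 : 6 / L ^ 2 ≤ 6 / 13.8 ^ 2 := by gcongr
    have e3 : 24 / L ^ 3 ≤ 24 / 13.8 ^ 3 := by gcongr
    have e4 : 440 / L ^ 4 ≤ 440 / 13.8 ^ 4 := by gcongr
    norm_num at e1 e2 e3 e4 ⊢
    linarith
  have hgap : x / L + 6 / 5 * x / L ^ 2 - liMajorant x =
      x / L ^ 2 * (1 / 5 - 2 / L - 6 / L ^ 2 - 24 / L ^ 3 - 440 / L ^ 4) := by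
    have : L ≠ 0 := (by linarith : 0 < L).ne'
    rw [liMajorant, ← hLx]
    field_simp
    ring
  linarith [mul_le_mul hratio hψ (by norm_num) (by linarith)]

theorem Li_upper_bound (x : ℝ) (hx : 10 ^ 6 ≤ x) :
    Li x < x / Real.log x + (6 / 5) * x / (Real.log x) ^ 2 :=
  calc Li x ≤ liMajorant x + 2 := Li_le_liMajorant_add_two (by linarith)
    _ < _ := liMajorant_add_two_lt hx
end

section
/- For all integers n in [19, 10^6], π(n;4,3) > n/(2 log n). -/
noncomputable def piMod4 (x : ℝ) (a : ℕ) : ℕ :=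
  ((Finset.range (⌊x⌋₊ + 1)).filter (fun p => p.Prime ∧ p % 4 = a)).card

/-!
Every `n ∈ [19, 10⁶]` lies in one of about a hundred blocks `[lo, hi]` for which
`π(lo;4,3) = c` is known exactly and `hi < 2 c log lo`; then `n / (2 log n) ≤ hi / (2 log lo) < c
≤ π(n;4,3)`. The bound on `log lo` is certified in integers: since `(1 - x/K)^K ≤ e^{-x}`, the
inequality `(2cK)^K < lo (2cK - hi)^K` gives `hi / (2c) < log lo`. The counts are accumulated block
by block along the progression `4i + 3`, and a number `k < 1001²` is prime iff it is coprime to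
`(min 1000 (k - 1))!`, so everything reduces to one kernel computation.
-/

open Nat

theorem Nat.prime_iff_coprime_factorial {k m : ℕ} (hmk : m < k) (hkm : k < (m + 1) ^ 2) :
    k.Prime ↔ k.Coprime m ! := by
  refine ⟨fun hk => hk.coprime_iff_not_dvd.2 fun h => (hk.dvd_factorial.1 h).not_gt hmk,
    fun hc => ?_⟩
  have hk1 : k ≠ 1 := by rintro rfl; simp_all
  by_contra hk
  have hq := minFac_prime hk1
  have hqm : k.minFac ≤ m := Nat.lt_succ_iff.1 <|
    lt_of_pow_lt_pow_left₀ 2 (by positivity) ((minFac_sq_le_self (by omega) hk).trans_lt hkm)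
  exact hq.one_lt.ne' (eq_one_of_dvd_coprimes hc (minFac_dvd k) (dvd_factorial hq.pos hqm))

-- `B - (B + 1 - k)` is `min B (k - 1)`, in a form the kernel evaluates natively.
def primeTest (B k : ℕ) : Bool := Nat.beq (Nat.gcd k (B - (B + 1 - k))!) 1

theorem primeTest_iff {B k : ℕ} (hk : 2 ≤ k) (hkB : k < (B + 1) ^ 2) :
    primeTest B k ↔ k.Prime := by
  rw [primeTest, Nat.beq_eq, ← Nat.Coprime,
    prime_iff_coprime_factorial (m := B - (B + 1 - k)) (by omega)]
  by_cases hsmall : k ≤ B + 1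
  · rw [show B - (B + 1 - k) + 1 = k by omega]; nlinarith
  · rwa [show B - (B + 1 - k) = B by omega]

def treeCount (t : ℕ → Bool) : ℕ → ℕ → ℕ
  | 0, a => (t a).toNat
  | d + 1, a => treeCount t d a + treeCount t d (a + 2 ^ d)

theorem count_add_two_pow (t : ℕ → Bool) (d a : ℕ) :
    count (t ·) (a + 2 ^ d) = count (t ·) a + treeCount t d a := by
  induction d generalizing a with
  | zero => cases h : t a <;> simp [count_succ, treeCount, h]
  | succ d ih => rw [pow_succ, mul_two, ← add_assoc, ih, ih, treeCount, add_assoc]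

theorem Real.lt_log_of_one_lt_mul_one_sub_div_pow {a x : ℝ} {K : ℕ} (hx : x ≤ K)
    (h : 1 < a * (1 - x / K) ^ K) : x < Real.log a := by
  have hpow : 0 ≤ (1 - x / K) ^ K := by
    rcases K.eq_zero_or_pos with rfl | hK
    · simp
    · exact pow_nonneg (by rw [sub_nonneg, div_le_one (by positivity)]; exact hx) K
  have ha : 0 < a := by
    by_contra! ha; nlinarith
  rw [Real.lt_log_iff_exp_lt ha]
  calc Real.exp x = Real.exp x * 1 := (mul_one _).symm
    _ < Real.exp x * (a * Real.exp (-x)) := by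
      gcongr; exact h.trans_le (by gcongr; exact Real.one_sub_div_pow_le_exp_neg hx)
    _ = a := by rw [mul_left_comm, ← Real.exp_add, add_neg_cancel, Real.exp_zero, mul_one]

def logCert (K a b c : ℕ) : Bool := b < 2 * c * K && (2 * c * K) ^ K < a * (2 * c * K - b) ^ K

theorem pos_of_logCert {K a b c : ℕ} (h : logCert K a b c) : 0 < c ∧ 0 < a := by
  simp only [logCert, Bool.and_eq_true, decide_eq_true_eq] at h
  obtain ⟨hb, hpow⟩ := h
  exact ⟨Nat.pos_of_ne_zero fun h0 => by simp [h0] at hb,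
    Nat.pos_of_ne_zero fun h0 => by simp [h0] at hpow⟩

theorem div_lt_log_of_logCert {K a b c : ℕ} (h : logCert K a b c) :
    (b : ℝ) / (2 * c) < Real.log a := by
  have hc : (0 : ℝ) < c := by exact_mod_cast (pos_of_logCert h).1
  simp only [logCert, Bool.and_eq_true, decide_eq_true_eq] at h
  obtain ⟨hb, hpow⟩ := h
  have hA : (0 : ℝ) < (2 * c * K : ℕ) := by exact_mod_cast hb.pos
  have hK : (0 : ℝ) < K := by exact_mod_cast Nat.pos_of_ne_zero fun h0 => by simp [h0] at hb
  refine Real.lt_log_of_one_lt_mul_one_sub_div_pow (K := K) ?_ ?_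
  · rw [div_le_iff₀ (by positivity)]; exact_mod_cast (by nlinarith : b ≤ K * (2 * c))
  · have hsub : 1 - (b : ℝ) / (2 * c) / K = ((2 * c * K - b : ℕ) : ℝ) / (2 * c * K : ℕ) := by
      push_cast [hb.le]; field_simp
    rw [hsub, div_pow, mul_div_assoc', one_lt_div (by positivity)]
    exact_mod_cast hpow

theorem div_two_log_lt_of_div_lt_log {lo hi n c : ℕ} (hc : 0 < c)
    (h : (hi : ℝ) / (2 * c) < Real.log lo) (hlo : lo ≤ n) (hhi : n ≤ hi) :
    (n : ℝ) / (2 * Real.log n) < c := by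
  have hc' : (0 : ℝ) < 2 * c := by positivity
  have hlog_lo : 0 < Real.log lo := (div_nonneg (Nat.cast_nonneg _) hc'.le).trans_lt h
  have hlo_pos : (0 : ℝ) < lo := by
    rcases Nat.eq_zero_or_pos lo with rfl | h0
    · simp at hlog_lo
    · exact_mod_cast h0
  have hlog : Real.log lo ≤ Real.log n := Real.log_le_log hlo_pos (by exact_mod_cast hlo)
  rw [div_lt_iff₀ hc'] at h
  rw [div_lt_iff₀ (by linarith)]
  have : (n : ℝ) ≤ hi := by exact_mod_cast hhi
  nlinarith

theorem Nat.count_congr {p q : ℕ → Prop} [DecidablePred p] [DecidablePred q] {n : ℕ}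
    (h : ∀ k < n, p k ↔ q k) : count p n = count q n :=
  le_antisymm (count_mono_left fun k hk => (h k hk).1) (count_mono_left fun k hk => (h k hk).2)

-- Checkpoint `j` stands for `n = q * j - 1`, and `c` is the number of `i < j` with `t i`.
def chainCheck (t : ℕ → Bool) (q K N : ℕ) : ℕ → ℕ → List ℕ → Bool
  | j, _, [] => N < q * j - 1
  | j, c, d :: ds =>
    logCert K (q * j - 1) (q * (j + 2 ^ d) - 1) c &&
      chainCheck t q K N (j + 2 ^ d) (c + treeCount t d j) ds

theorem lt_count_of_chainCheck {t : ℕ → Bool} {q K N : ℕ} {ds : List ℕ} {j : ℕ}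
    (h : chainCheck t q K N j (count (t ·) j) ds) {n : ℕ} (hjn : q * j - 1 ≤ n) (hnN : n ≤ N) :
    (n : ℝ) / (2 * Real.log n) < count (t ·) ((n + 1) / q) := by
  induction ds generalizing j with
  | nil => simp only [chainCheck, decide_eq_true_eq] at h; omega
  | cons d ds ih =>
    simp only [chainCheck, Bool.and_eq_true] at h
    obtain ⟨hcert, hrest⟩ := h
    by_cases hn : n ≤ q * (j + 2 ^ d) - 1
    · obtain ⟨hc, hlo⟩ := pos_of_logCert hcert
      have hq : 0 < q := Nat.pos_of_ne_zero fun h0 => by simp [h0] at hlo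
      refine (div_two_log_lt_of_div_lt_log hc (div_lt_log_of_logCert hcert) hjn hn).trans_le ?_
      have hj : j ≤ (n + 1) / q := (Nat.le_div_iff_mul_le hq).2 (by rw [mul_comm]; omega)
      exact_mod_cast count_monotone _ hj
    · rw [← count_add_two_pow] at hrest
      exact ih hrest (by omega)

theorem piMod4_natCast_three (n : ℕ) :
    piMod4 n 3 = count (fun i => (4 * i + 3).Prime) ((n + 1) / 4) := by
  rw [piMod4, Nat.floor_natCast, count_eq_card_filter_range]
  refine Finset.card_nbij' (· / 4) (4 * · + 3) ?_ ?_ ?_ ?_ <;>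
    intro x hx <;> simp only [Finset.coe_filter, Finset.mem_range, Set.mem_ofPred_eq] at hx ⊢
  · obtain ⟨hxn, hp, h3⟩ := hx
    exact ⟨by omega, by rwa [show 4 * (x / 4) + 3 = x by omega]⟩
  · exact ⟨by omega, hx.2, by omega⟩
  · omega
  · omega

-- Chosen greedily: each block as long as `logCert` with `K = 1000` allows.
def piMod4Steps : List ℕ :=
  [0, 1, 1, 0, 1, 1, 1, 2, 2, 2, 2, 3, 3, 3, 4, 4, 4, 4, 4, 4, 5, 5, 5, 5, 5, 5, 5, 6, 6, 6, 6,
   6, 6, 6, 6, 7, 7, 7, 7, 7, 7, 7, 8, 8, 8, 8, 8, 8, 8, 8, 8, 9, 9, 9, 9, 9, 9, 9, 9, 9, 10, 10,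
   10, 10, 10, 10, 10, 10, 10, 10, 10, 11, 11, 11, 11, 11, 11, 11, 11, 11, 11, 11, 11, 12, 12,
   12, 12, 12, 12, 12, 12, 12, 12, 12, 12, 12, 13, 13, 13, 13, 13, 13, 13, 13, 13, 13, 13, 13,
   13, 14, 14, 14]

def apPrimeTest (i : ℕ) : Bool := primeTest 1000 (4 * i + 3)

theorem chainCheck_piMod4Steps :
    chainCheck apPrimeTest 4 1000 (10 ^ 6) 5 (count (apPrimeTest ·) 5) piMod4Steps := by
  decide +kernel

theorem piMod4_lower_small (n : ℕ) (h1 : 19 ≤ n) (h2 : n ≤ 10 ^ 6) :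
    (n : ℝ) / (2 * Real.log n) < (piMod4 (n : ℝ) 3 : ℝ) := by
  have htest : count (apPrimeTest ·) ((n + 1) / 4) =
      count (fun i => (4 * i + 3).Prime) ((n + 1) / 4) :=
    count_congr fun i hi => primeTest_iff (by omega) (by omega)
  rw [piMod4_natCast_three, ← htest]
  exact lt_count_of_chainCheck chainCheck_piMod4Steps (by omega) h2
end

section
/- For every real x > 0, π(x;4,3) ≤ x/(2 log x) + (5/4)·x/(log x)^2, where log is natural logarithm (interpreting the right-hand side suitably for x ≤ 1; it suffices to prove this for x ≥ 2 assuming it holds at all integers in [2, 10^6] and the bound of Bennett–Martin–O'Bryant–Rechnitzer for x ≥ 10^6). -/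
/-!
Above `10 ^ 6` the sharper bound applies, since `0.627 ≤ 5 / 4`. Below it, `π(x; 4, 3)` equals its
value at `n = ⌊x⌋`, where the bound is assumed; the bound is increasing on `[e², ∞)`, so the value
at `n` is at most the value at `x` once `n ≥ 8`. For `x < 8` at most two primes (3 and 7) are
counted, while the bound exceeds `2` for every `x > 1`.
-/

open Real

lemma piMod4_natFloor (x : ℝ) (a : ℕ) : piMod4 ⌊x⌋₊ a = piMod4 x a := by
  simp only [piMod4, Nat.floor_natCast]

lemma piMod4_three_le_two {x : ℝ} (hx : x < 8) : piMod4 x 3 ≤ 2 := by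
  have hfloor : ⌊x⌋₊ + 1 ≤ 8 := Nat.floor_lt' (by norm_num) |>.2 hx
  calc piMod4 x 3
      ≤ ((Finset.range 8).filter fun p => p.Prime ∧ p % 4 = 3).card :=
        Finset.card_le_card (Finset.filter_subset_filter _ (Finset.range_subset_range.2 hfloor))
    _ = 2 := by decide

lemma exp_two_lt_eight : exp 2 < 8 := by
  have h := exp_one_lt_d9
  have h0 := exp_pos 1
  rw [show (2 : ℝ) = 1 + 1 by norm_num, exp_add]
  nlinarith

lemma div_log_monotoneOn : MonotoneOn (fun x : ℝ ↦ x / log x) (Set.Ici (exp 1)) := by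
  intro a ha b hb hab
  have hpos : 0 < log b / b :=
    div_pos (log_pos ((one_lt_exp_iff.2 one_pos).trans_le hb)) ((exp_pos 1).trans_le hb)
  simp only [← inv_div (log _)]
  exact inv_anti₀ hpos (log_div_self_antitoneOn ha hb hab)

lemma div_log_sq_monotoneOn : MonotoneOn (fun x : ℝ ↦ x / log x ^ 2) (Set.Ici (exp 2)) := by
  intro a ha b hb hab
  have hpos : 0 < log b / √b :=
    div_pos (log_pos ((one_lt_exp_iff.2 two_pos).trans_le hb)) (sqrt_pos.2 ((exp_pos 2).trans_le hb))
  have hsq : ∀ t : ℝ, exp 2 ≤ t → t / log t ^ 2 = ((log t / √t) ^ 2)⁻¹ := fun t ht => by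
    rw [div_pow, sq_sqrt ((exp_pos 2).le.trans ht), inv_div]
  simp only [hsq a ha, hsq b hb]
  exact inv_anti₀ (pow_pos hpos 2) (pow_le_pow_left₀ hpos.le (log_div_sqrt_antitoneOn ha hb hab) 2)

noncomputable def piMod4Bound (x : ℝ) : ℝ := x / (2 * log x) + 5 / 4 * x / log x ^ 2

lemma piMod4Bound_eq_div_log (x : ℝ) : piMod4Bound x = (x / log x) / 2 + 5 / 4 * (x / log x ^ 2) := by
  unfold piMod4Bound; ring

lemma piMod4Bound_monotoneOn : MonotoneOn piMod4Bound (Set.Ici (exp 2)) := by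
  intro a ha b hb hab
  have hexp : exp 1 ≤ exp 2 := exp_le_exp.2 one_le_two
  have h1 := div_log_monotoneOn (hexp.trans ha) (hexp.trans hb) hab
  have h2 := div_log_sq_monotoneOn ha hb hab
  simp only at h1 h2
  rw [piMod4Bound_eq_div_log, piMod4Bound_eq_div_log]
  linarith

lemma two_lt_piMod4Bound {x : ℝ} (hx : 1 < x) : 2 < piMod4Bound x := by
  have hL := log_pos hx
  have hexp : 1 + log x + log x ^ 2 / 2 ≤ x := by
    simpa only [exp_log (by linarith : 0 < x)] using quadratic_le_exp_of_nonneg hL.le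
  rw [show piMod4Bound x = x * (2 * log x + 5) / (4 * log x ^ 2) by
    unfold piMod4Bound; field_simp; ring, lt_div_iff₀ (by positivity)]
  -- with `L = log x`: `(1 + L + L² / 2)(2L + 5) - 8L² = L((L - 7/4)² + 63/16) + 5`
  nlinarith [sq_nonneg (log x - 7 / 4)]

theorem piMod4_upper
    (hInt : ∀ n : ℕ, 2 ≤ n → n ≤ 10 ^ 6 →
      (piMod4 (n : ℝ) 3 : ℝ) ≤ (n : ℝ) / (2 * Real.log n) + (5 / 4) * n / (Real.log n) ^ 2)
    (hLarge : ∀ x : ℝ, 10 ^ 6 ≤ x →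
      (piMod4 x 3 : ℝ) < x / (2 * Real.log x) + 0.627 * x / (Real.log x) ^ 2) :
    ∀ x : ℝ, 2 ≤ x →
      (piMod4 x 3 : ℝ) ≤ x / (2 * Real.log x) + (5 / 4) * x / (Real.log x) ^ 2 := by
  intro x hx
  rcases le_or_gt (10 ^ 6) x with hbig | hsmall
  · have hx0 : 0 < x := by linarith
    have hcoeff : 0.627 * x / log x ^ 2 ≤ 5 / 4 * x / log x ^ 2 :=
      div_le_div_of_nonneg_right (by linarith) (sq_nonneg _)
    linarith [hLarge x hbig]
  rcases lt_or_ge x 8 with h8 | h8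
  · have hcount : (piMod4 x 3 : ℝ) ≤ 2 := by exact_mod_cast piMod4_three_le_two h8
    exact hcount.trans (two_lt_piMod4Bound (by linarith)).le
  · have hn8 : 8 ≤ ⌊x⌋₊ := Nat.le_floor (by exact_mod_cast h8)
    have hn6 : ⌊x⌋₊ ≤ 10 ^ 6 := Nat.floor_le_of_le (by exact_mod_cast hsmall.le)
    have hn : exp 2 ≤ ⌊x⌋₊ := exp_two_lt_eight.le.trans (by exact_mod_cast hn8)
    have hnx : (⌊x⌋₊ : ℝ) ≤ x := Nat.floor_le (by linarith)
    rw [← piMod4_natFloor]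
    exact (hInt _ (by omega) hn6).trans (piMod4Bound_monotoneOn hn (hn.trans hnx) hnx)
end
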